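/- arXiv:1510.02526 — 5 statements merged into one kernel-verified Lean document; each statement's English description precedes it below -/
import Mathlib

section
/- Let C be a cycle of length 2k and P a path with E(C) ∩ E(P) = ∅ whose end vertices lie in V(C). If H = C ∪ P has girth at least 2k−2 and P contains a vertex of C as an internal vertex, then P has length at least 2k−3. -/
/-!
Let `z` be an internal vertex of `P` lying on `C`, and split `P` at `z` into `P₁ : u → z` and
`P₂ : z → v`. Going around `C` from `z`, one meets `u` and `v` at different positions, so `C`
contains an arc `z → u` and an arc `z → v` of total length at most `2k - 1`. Each of
`P₁`, `P₂` closes up with its arc to a circuit of `C ∪ P`, of length at least the girth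
`2k - 2`; adding the two inequalities gives `|P| ≥ 2(2k - 2) - (2k - 1) = 2k - 3`.
-/

/-- The union of two walks' edge sets, as a simple graph on the same vertex type. -/
def unionGraph {V : Type*} {G : SimpleGraph V} {a b c d : V}
    (C : G.Walk a b) (P : G.Walk c d) : SimpleGraph V :=
  SimpleGraph.fromEdgeSet ({e | e ∈ C.edges} ∪ {e | e ∈ P.edges})

namespace SimpleGraph.Walk

variable {V : Type*} {G : SimpleGraph V}

lemma IsTrail.isCircuit_append {x y : V} {p : G.Walk x y} {q : G.Walk y x}
    (hp : p.IsTrail) (hq : q.IsTrail) (hpq : p.edges.Disjoint q.edges) (hxy : x ≠ y) :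
    (p.append q).IsCircuit where
  isTrail := (isTrail_append p q).mpr ⟨hp, hq, hpq⟩
  ne_nil h := hxy <| eq_of_length_eq_zero (p := p) <| by
    have := congrArg length h
    rw [length_append, length_nil] at this
    omega

lemma IsCircuit.girth_le_length_of_edges_mem {H : SimpleGraph V} {x : V} {w : G.Walk x x}
    (hw : w.IsCircuit) (hH : ∀ e ∈ w.edges, e ∈ H.edgeSet) : H.girth ≤ w.length := by
  have hcirc : (w.transfer H hH).IsCircuit :=
    { isTrail := by rw [isTrail_def, edges_transfer]; exact hw.edges_nodup
      ne_nil := fun h => hw.not_nil <| length_eq_zero_iff.mp <| by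
        simpa using congrArg length h }
  simpa using hcirc.girth_le_length

lemma IsTrail.exists_arcs_length_add_lt {c z u v : V} {w : G.Walk c c}
    (hw : w.IsTrail) (hz : z ∈ w.support) (hu : u ∈ w.support) (hv : v ∈ w.support)
    (huv : u ≠ v) :
    ∃ (q₁ : G.Walk z u) (q₂ : G.Walk z v), q₁.IsTrail ∧ q₂.IsTrail ∧
      q₁.edges ⊆ w.edges ∧ q₂.edges ⊆ w.edges ∧ q₁.length + q₂.length < w.length := by
  classical
  set r := w.rotate z hz
  have hr : r.IsTrail := hw.rotate hz
  have hre : r.edges ⊆ w.edges := (w.rotate_edges z hz).perm.subset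
  rw [← mem_support_rotate_iff w z hz] at hu hv
  have hrlen : r.length = w.length := length_rotate w z hz
  wlog h : (r.takeUntil u hu).length < (r.takeUntil v hv).length generalizing u v
  · have hne : (r.takeUntil u hu).length ≠ (r.takeUntil v hv).length := fun h =>
      huv (by rw [← getVert_length_takeUntil hu, h, getVert_length_takeUntil hv])
    obtain ⟨q₂, q₁, h₂, h₁, e₂, e₁, hlen⟩ := this hv hu huv.symm (by omega)
    exact ⟨q₁, q₂, h₁, h₂, e₁, e₂, by omega⟩
  have hsplit := congrArg length (r.take_spec hv)
  rw [length_append] at hsplit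
  refine ⟨r.takeUntil u hu, (r.dropUntil v hv).reverse, hr.takeUntil hu,
    (hr.dropUntil hv).reverse, fun e he => hre (r.edges_takeUntil_subset_edges hu he),
    fun e he => ?_, ?_⟩
  · exact hre (r.edges_dropUntil_subset_edges hv (by simpa using he))
  · rw [length_reverse]
    omega

end SimpleGraph.Walk

open SimpleGraph Walk

lemma mem_edgeSet_unionGraph {V : Type*} {G : SimpleGraph V} {a b c d : V}
    {C : G.Walk a b} {P : G.Walk c d} {e : Sym2 V} (he : e ∈ C.edges ∨ e ∈ P.edges) :
    e ∈ (unionGraph C P).edgeSet := by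
  rw [unionGraph, edgeSet_fromEdgeSet]
  refine ⟨he, ?_⟩
  rcases he with he | he
  · exact G.not_isDiag_of_mem_edgeSet (C.edges_subset_edgeSet he)
  · exact G.not_isDiag_of_mem_edgeSet (P.edges_subset_edgeSet he)

lemma girth_unionGraph_le_length_add {V : Type*} {G : SimpleGraph V} {a b c d x y : V}
    {C : G.Walk a b} {P : G.Walk c d} (hdisj : ∀ e ∈ C.edges, e ∉ P.edges)
    {p : G.Walk x y} {q : G.Walk y x} (hp : p.IsTrail) (hq : q.IsTrail)
    (hpP : p.edges ⊆ P.edges) (hqC : q.edges ⊆ C.edges) (hxy : x ≠ y) :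
    (unionGraph C P).girth ≤ p.length + q.length := by
  have hcirc := hp.isCircuit_append hq (fun e hep heq => hdisj e (hqC heq) (hpP hep)) hxy
  rw [← length_append]
  refine hcirc.girth_le_length_of_edges_mem fun e he => mem_edgeSet_unionGraph ?_
  rw [edges_append, List.mem_append] at he
  exact he.symm.imp (@hqC e) (@hpP e)

theorem stmt2_general {V : Type*} (k : ℕ) (G : SimpleGraph V)
    {c u v : V} (C : G.Walk c c) (P : G.Walk u v)
    (hC : C.IsCycle) (hClen : C.length = 2 * k)
    (hP : P.IsPath)
    (hu : u ∈ C.support) (hv : v ∈ C.support)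
    (hdisj : ∀ e ∈ C.edges, e ∉ P.edges)
    (hgirth : ((2 * k - 2 : ℕ) : ℕ∞) ≤ (unionGraph C P).girth)
    (hint : ∃ z, z ∈ C.support ∧ z ∈ P.support ∧ z ≠ u ∧ z ≠ v) :
    2 * k - 3 ≤ P.length := by
  classical
  obtain ⟨z, hzC, hzP, hzu, hzv⟩ := hint
  have huv : u ≠ v := by
    rintro rfl
    exact hzu (by simpa [(isPath_iff_nil.mp hP).eq_nil] using hzP)
  obtain ⟨q₁, q₂, hq₁, hq₂, hq₁C, hq₂C, hqlen⟩ :=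
    hC.isTrail.exists_arcs_length_add_lt hzC hu hv huv
  have hPlen := congrArg length (P.take_spec hzP)
  rw [length_append] at hPlen
  have h₁ := girth_unionGraph_le_length_add hdisj (hP.isTrail.takeUntil hzP) hq₁
    (P.edges_takeUntil_subset_edges hzP) hq₁C hzu.symm
  have h₂ := girth_unionGraph_le_length_add hdisj (hP.isTrail.dropUntil hzP) hq₂.reverse
    (P.edges_dropUntil_subset_edges hzP) (by simpa using hq₂C) hzv
  have hgirth' : 2 * k - 2 ≤ (unionGraph C P).girth := by exact_mod_cast hgirth
  rw [length_reverse] at h₂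
  omega

/-- If `C` is a cycle of length `2k`, `P` is a path edge-disjoint from
`C` with end vertices on `C`, `H = C ∪ P` has girth at least `2k-2`, and `P`
contains a vertex of `C` as an internal vertex, then `P` has length
at least `2k-3`. -/
theorem stmt2 {V : Type*} (k : ℕ) (hk : 3 ≤ k) (G : SimpleGraph V)
    {c u v : V} (C : G.Walk c c) (P : G.Walk u v)
    (hC : C.IsCycle) (hClen : C.length = 2 * k)
    (hP : P.IsPath)
    (hu : u ∈ C.support) (hv : v ∈ C.support)
    (hdisj : ∀ e ∈ C.edges, e ∉ P.edges)
    (hgirth : ((2 * k - 2 : ℕ) : ℕ∞) ≤ (unionGraph C P).girth)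
    (hint : ∃ z, z ∈ C.support ∧ z ∈ P.support ∧ z ≠ u ∧ z ≠ v) :
    2 * k - 3 ≤ P.length :=
  stmt2_general k G C P hC hClen hP hu hv hdisj hgirth hint
end

section
/- Let k ≥ 3, let C be a cycle of length 2k and P a path of length ℓ ∈ {2k−1, 2k, 2k+1}, edge-disjoint from C with no end vertex of P in V(C), such that H = C ∪ P has girth at least 2k−2. Then |V(C) ∩ V(P)| ≤ 4, and if |V(C) ∩ V(P)| = 4 then k ≤ 4. -/
/-!
Record the vertices of `P` lying on `C` by their positions `i₀ < i₁ < ⋯` along `P`. The piece of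
`P` between two of them, closed up by either arc of `C`, is a circuit in `C ∪ P`, so the girth
bound makes every gap `j - i` at least `2k - 2 - min d (2k - d) ≥ k - 2`, where `d` is the
distance of the two vertices along `C`; equality forces them to be antipodal on `C`. Two
consecutive gaps cannot both be minimal, since the antipode is unique and `P` does not revisit a
vertex, so two consecutive gaps add up to at least `2k - 3`. As the ends of `P` are off `C`, all
gaps fit into `ℓ - 2 ≤ 2k - 1`: five vertices on `C` would need `2 (2k - 3)`, and four need
`3k - 5`, which forces `k ≤ 4`.
-/

theorem Finset.card_le_four_of_gaps {I : Finset ℕ} {k L : ℕ} (hk : 3 ≤ k) (hL : L ≤ 2 * k + 1)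
    (hI : ∀ i ∈ I, 1 ≤ i ∧ i < L) (h₂ : ∀ i ∈ I, ∀ j ∈ I, i < j → k - 2 ≤ j - i)
    (h₃ : ∀ i ∈ I, ∀ j ∈ I, ∀ m ∈ I, i < j → j < m → 2 * k - 3 ≤ m - i) :
    I.card ≤ 4 ∧ (I.card = 4 → k ≤ 4) := by
  constructor
  · by_contra! h5
    set f := I.orderEmbOfCardLe (k := 5) h5
    have hf : ∀ x, f x ∈ I := I.orderEmbOfCardLe_mem h5
    have hlt : ∀ x y : Fin 5, x < y → f x < f y := fun x y => f.lt_iff_lt.mpr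
    have := h₃ _ (hf 0) _ (hf 1) _ (hf 2) (hlt 0 1 (by decide)) (hlt 1 2 (by decide))
    have := h₃ _ (hf 2) _ (hf 3) _ (hf 4) (hlt 2 3 (by decide)) (hlt 3 4 (by decide))
    have := hI _ (hf 0)
    have := hI _ (hf 4)
    omega
  · intro h4
    set f := I.orderEmbOfCardLe (k := 4) h4.ge
    have hf : ∀ x, f x ∈ I := I.orderEmbOfCardLe_mem h4.ge
    have hlt : ∀ x y : Fin 4, x < y → f x < f y := fun x y => f.lt_iff_lt.mpr
    have := h₃ _ (hf 0) _ (hf 1) _ (hf 2) (hlt 0 1 (by decide)) (hlt 1 2 (by decide))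
    have := h₂ _ (hf 2) _ (hf 3) (hlt 2 3 (by decide))
    have := hI _ (hf 0)
    have := hI _ (hf 3)
    omega

namespace SimpleGraph

variable {V : Type*} {G : SimpleGraph V}

namespace Walk

theorem exists_subwalk_getVert {u v : V} (p : G.Walk u v) (hp : p.IsTrail) {i j : ℕ}
    (hij : i ≤ j) (hj : j ≤ p.length) :
    ∃ q : G.Walk (p.getVert i) (p.getVert j),
      q.length = j - i ∧ q.IsTrail ∧ q.edges ⊆ p.edges := by
  have hsub : ((p.drop i).take (j - i)).edges.Sublist p.edges := by
    rw [edges_take, edges_drop]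
    exact (List.take_sublist _ _).trans (List.drop_sublist _ _)
  refine ⟨((p.drop i).take (j - i)).copy rfl (by rw [drop_getVert, Nat.add_sub_cancel' hij]),
    ?_, ?_, ?_⟩
  · simp only [length_copy, take_length, drop_length]
    omega
  · rw [isTrail_def, edges_copy]
    exact hp.edges_nodup.sublist hsub
  · rw [edges_copy]
    exact hsub.subset

theorem exists_wraparound_getVert {u : V} (p : G.Walk u u) (hp : p.IsTrail) {i j : ℕ}
    (hij : i ≤ j) (hj : j ≤ p.length) :
    ∃ q : G.Walk (p.getVert j) (p.getVert i),
      q.length = p.length - (j - i) ∧ q.IsTrail ∧ q.edges ⊆ p.edges := by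
  have hsub : (p.edges.take i ++ p.edges.drop j).Sublist p.edges := by
    conv_rhs => rw [← List.take_append_drop j p.edges]
    exact (List.take_sublist_take_left hij).append (List.Sublist.refl _)
  refine ⟨(p.drop j).append (p.take i), ?_, ?_, ?_⟩
  · simp only [length_append, drop_length, take_length]
    omega
  · rw [isTrail_def, edges_append, edges_drop, edges_take]
    exact List.perm_append_comm.nodup_iff.mp (hp.edges_nodup.sublist hsub)
  · rw [edges_append, edges_drop, edges_take]
    exact fun e he => hsub.subset (List.perm_append_comm.subset he)

theorem exists_lt_length_getVert_eq {u x : V} (p : G.Walk u u) (hp : 0 < p.length)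
    (hx : x ∈ p.support) : ∃ a < p.length, p.getVert a = x := by
  obtain ⟨n, rfl, hn⟩ := mem_support_iff_exists_getVert.mp hx
  rcases hn.lt_or_eq with hn | rfl
  · exact ⟨n, hn, rfl⟩
  · exact ⟨0, hp, by simp⟩

theorem girth_le_length_append {x y : V} (q : G.Walk x y) (r : G.Walk y x)
    (hq : q.IsTrail) (hr : r.IsTrail) (hqr : ∀ e ∈ q.edges, e ∉ r.edges) (hq0 : 0 < q.length) :
    G.girth ≤ q.length + r.length := by
  have hcirc : (q.append r).IsCircuit := by
    refine ⟨?_, fun h => ?_⟩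
    · rw [isTrail_def, edges_append]
      exact hq.edges_nodup.append hr.edges_nodup hqr
    · have := congrArg length h
      rw [length_append, length_nil] at this
      omega
  simpa using hcirc.girth_le_length

theorem girth_le_length_add_arc {c : V} (C : G.Walk c c) (hC : C.IsTrail) {a b : ℕ}
    (hab : a ≤ b) (hb : b ≤ C.length) (q : G.Walk (C.getVert a) (C.getVert b))
    (hq : q.IsTrail) (hqC : ∀ e ∈ q.edges, e ∉ C.edges) (hq0 : 0 < q.length) :
    G.girth ≤ q.length + (b - a) ∧ G.girth ≤ q.length + (C.length - (b - a)) := by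
  obtain ⟨r₁, hr₁, hr₁t, hr₁C⟩ := C.exists_subwalk_getVert hC hab hb
  obtain ⟨r₂, hr₂, hr₂t, hr₂C⟩ := C.exists_wraparound_getVert hC hab hb
  constructor
  · have := q.girth_le_length_append r₁.reverse hq hr₁t.reverse
      (fun e he h => hqC e he (hr₁C (by simpa using h))) hq0
    rwa [length_reverse, hr₁] at this
  · have := q.girth_le_length_append r₂ hq hr₂t (fun e he h => hqC e he (hr₂C h)) hq0
    rwa [hr₂] at this

theorem IsPath.card_inter_toFinset_support [DecidableEq V] {u v : V} {p : G.Walk u v}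
    (hp : p.IsPath) (s : Finset V) :
    (s ∩ p.support.toFinset).card =
      ((Finset.range (p.length + 1)).filter (fun i => p.getVert i ∈ s)).card := by
  rw [← Finset.card_image_of_injOn (f := p.getVert)]
  · congr 1
    ext x
    simp only [Finset.mem_inter, List.mem_toFinset, mem_support_iff_exists_getVert,
      Finset.mem_image, Finset.mem_filter, Finset.mem_range, Nat.lt_succ_iff]
    constructor
    · rintro ⟨hx, n, rfl, hn⟩
      exact ⟨n, ⟨hn, hx⟩, rfl⟩
    · rintro ⟨n, ⟨hn, hx⟩, rfl⟩
      exact ⟨hx, n, rfl, hn⟩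
  · intro i hi j hj
    simp only [Finset.coe_filter, Finset.mem_range, Nat.lt_succ_iff, Set.mem_ofPred_eq] at hi hj
    exact hp.getVert_injOn hi.1 hj.1

end Walk

namespace CyclePathIntersection

open Walk

variable {k : ℕ} {c u v : V} {C : G.Walk c c} {P : G.Walk u v}

theorem gap_bound_of_getVert_eq (hC : C.IsTrail) (hClen : C.length = 2 * k) (hP : P.IsTrail)
    (hdisj : ∀ e ∈ C.edges, e ∉ P.edges) (hgirth : 2 * k - 2 ≤ G.girth)
    {i j a b : ℕ} (hij : i < j) (hj : j ≤ P.length) (ha : a < 2 * k) (hb : b < 2 * k)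
    (hia : P.getVert i = C.getVert a) (hjb : P.getVert j = C.getVert b) :
    k - 2 ≤ j - i ∧ (j - i < k - 1 → a + k = b ∨ b + k = a) := by
  obtain ⟨q, hqlen, hq, hqP⟩ := P.exists_subwalk_getVert hP hij.le hj
  have hqC : ∀ e ∈ q.edges, e ∉ C.edges := fun e he h => hdisj e h (hqP he)
  rcases le_total a b with hab | hba
  · have := C.girth_le_length_add_arc hC hab (by omega) (q.copy hia hjb)
      (by simpa [isTrail_def] using hq) (by simpa using hqC) (by rw [length_copy]; omega)
    simp only [length_copy] at this
    omega
  · have := C.girth_le_length_add_arc hC hba (by omega) (q.copy hia hjb).reverse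
      (by simpa [isTrail_def] using hq) (by simpa using hqC) (by rw [length_reverse, length_copy]; omega)
    simp only [length_reverse, length_copy] at this
    omega

theorem gap_bound (hC : C.IsTrail) (hClen : C.length = 2 * k) (hP : P.IsTrail)
    (hdisj : ∀ e ∈ C.edges, e ∉ P.edges) (hgirth : 2 * k - 2 ≤ G.girth) (hk : 0 < k)
    {i j : ℕ} (hij : i < j) (hj : j ≤ P.length)
    (hiC : P.getVert i ∈ C.support) (hjC : P.getVert j ∈ C.support) : k - 2 ≤ j - i := by
  obtain ⟨a, ha, hia⟩ := C.exists_lt_length_getVert_eq (by omega) hiC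
  obtain ⟨b, hb, hjb⟩ := C.exists_lt_length_getVert_eq (by omega) hjC
  exact (gap_bound_of_getVert_eq hC hClen hP hdisj hgirth hij hj (by omega) (by omega)
    hia.symm hjb.symm).1

theorem two_gaps_bound (hC : C.IsTrail) (hClen : C.length = 2 * k) (hP : P.IsPath)
    (hdisj : ∀ e ∈ C.edges, e ∉ P.edges) (hgirth : 2 * k - 2 ≤ G.girth) (hk : 0 < k)
    {i j m : ℕ} (hij : i < j) (hjm : j < m) (hm : m ≤ P.length)
    (hi : P.getVert i ∈ C.support) (hj : P.getVert j ∈ C.support)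
    (hm' : P.getVert m ∈ C.support) :
    2 * k - 3 ≤ m - i := by
  have hC0 : 0 < C.length := by omega
  obtain ⟨a, ha, hia⟩ := C.exists_lt_length_getVert_eq hC0 hi
  obtain ⟨b, hb, hjb⟩ := C.exists_lt_length_getVert_eq hC0 hj
  obtain ⟨e, he, hme⟩ := C.exists_lt_length_getVert_eq hC0 hm'
  have h₁ := gap_bound_of_getVert_eq hC hClen hP.isTrail hdisj hgirth hij (by omega)
    (by omega) (by omega) hia.symm hjb.symm
  have h₂ := gap_bound_of_getVert_eq hC hClen hP.isTrail hdisj hgirth hjm hm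
    (by omega) (by omega) hjb.symm hme.symm
  by_contra hlt
  have hae : a = e := by omega
  have him : i = m := hP.getVert_injOn (by simp only [Set.mem_ofPred_eq]; omega)
    (by simp only [Set.mem_ofPred_eq]; omega) (by rw [← hia, ← hme, hae])
  omega

theorem card_inter_support_le_four [DecidableEq V] (hk : 3 ≤ k) (hC : C.IsTrail)
    (hClen : C.length = 2 * k) (hP : P.IsPath) (hPlen : P.length ≤ 2 * k + 1)
    (hdisj : ∀ e ∈ C.edges, e ∉ P.edges) (hu : u ∉ C.support) (hv : v ∉ C.support)
    (hgirth : 2 * k - 2 ≤ G.girth) :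
    (C.support.toFinset ∩ P.support.toFinset).card ≤ 4 ∧
      ((C.support.toFinset ∩ P.support.toFinset).card = 4 → k ≤ 4) := by
  rw [hP.card_inter_toFinset_support]
  have hmem : ∀ i ∈ (Finset.range (P.length + 1)).filter (P.getVert · ∈ C.support.toFinset),
      P.getVert i ∈ C.support ∧ i ≤ P.length := by
    intro i hi
    simp only [Finset.mem_filter, Finset.mem_range, List.mem_toFinset] at hi
    exact ⟨hi.2, by omega⟩
  refine Finset.card_le_four_of_gaps hk hPlen (fun i hi => ?_)
    (fun i hi j hj hij => gap_bound hC hClen hP.isTrail hdisj hgirth (by omega) hij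
      (hmem j hj).2 (hmem i hi).1 (hmem j hj).1)
    (fun i hi j hj m hm hij hjm => two_gaps_bound hC hClen hP hdisj hgirth (by omega) hij hjm
      (hmem m hm).2 (hmem i hi).1 (hmem j hj).1 (hmem m hm).1)
  obtain ⟨hiC, hiP⟩ := hmem i hi
  refine ⟨Nat.one_le_iff_ne_zero.mpr fun h => hu ?_, Nat.lt_of_le_of_ne hiP fun h => hv ?_⟩
  · simpa [h] using hiC
  · simpa [h] using hiC

end CyclePathIntersection

end SimpleGraph

open SimpleGraph Walk CyclePathIntersection in
/-- Let `k ≥ 3`, `C` a cycle of length `2k` and `P` a path of length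
`ℓ ∈ {2k-1, 2k, 2k+1}`, edge-disjoint from `C` with no end vertex of `P` on `C`,
such that `H = C ∪ P` has girth at least `2k-2`.  Then `|V(C) ∩ V(P)| ≤ 4`,
and if `|V(C) ∩ V(P)| = 4` then `k ≤ 4`. -/
theorem stmt8 {V : Type*} [DecidableEq V] (k : ℕ) (hk : 3 ≤ k) (G : SimpleGraph V)
    {c u v : V} (C : G.Walk c c) (P : G.Walk u v)
    (hC : C.IsCycle) (hClen : C.length = 2 * k)
    (hP : P.IsPath)
    (hlen : P.length = 2 * k - 1 ∨ P.length = 2 * k ∨ P.length = 2 * k + 1)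
    (hdisj : ∀ e ∈ C.edges, e ∉ P.edges)
    (hu : u ∉ C.support) (hv : v ∉ C.support)
    (hgirth : ((2 * k - 2 : ℕ) : ℕ∞) ≤ (unionGraph C P).girth) :
    (C.support.toFinset ∩ P.support.toFinset).card ≤ 4 ∧
    ((C.support.toFinset ∩ P.support.toFinset).card = 4 → k ≤ 4) := by
  have hCH : ∀ e ∈ C.edges, e ∈ (unionGraph C P).edgeSet := fun e he => by
    rw [unionGraph, edgeSet_fromEdgeSet]
    exact ⟨Or.inl he, G.not_isDiag_of_mem_edgeSet (C.edges_subset_edgeSet he)⟩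
  have hPH : ∀ e ∈ P.edges, e ∈ (unionGraph C P).edgeSet := fun e he => by
    rw [unionGraph, edgeSet_fromEdgeSet]
    exact ⟨Or.inr he, G.not_isDiag_of_mem_edgeSet (P.edges_subset_edgeSet he)⟩
  have := card_inter_support_le_four hk (hC.transfer hCH).isTrail
    (by rwa [length_transfer]) (hP.transfer hPH) (by rw [length_transfer]; omega)
    (by simpa only [edges_transfer] using hdisj) (by rwa [support_transfer])
    (by rwa [support_transfer]) (by exact_mod_cast hgirth)
  simpa only [support_transfer] using this
end

section
/- Let G be a 2k-regular graph (k ≥ 3) with a perfect matching M, and let P be a decomposition of G − M into paths of length 2k−1. Then each vertex of G is the end vertex of exactly one path of P, and consequently the edge set of G admits a partition into closed trails, each of which alternates between paths of P and edges of M (i.e., each closed trail is a cyclic sequence P_0 e_0 P_1 e_1 … P_{r−1} e_{r−1} where the e_i are distinct edges of M and each e_i joins an end vertex of P_i to an end vertex of P_{i+1}). -/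
/-!
In `G - M` every vertex has odd degree `2k - 1`, and a path meets a vertex in an odd number of
edges exactly when the vertex is one of its ends. Hence every vertex is an end of some path of
`D`, and since counting edges gives `|V| = 2 |D|`, of exactly one.

Let `ι v` be the other end of the path ending at `v`, and `μ` the matching. Following the path
from `v` to `ι v` and then the matching edge to `μ (ι v)`, and so on, traces a cycle of the
permutation `μ ∘ ι`, i.e. a closed trail alternating between paths of `D` and edges of `M`. The
cycle through `ι v` is the same trail run backwards, and it is a different cycle: conjugation by
`ι` inverts `μ ∘ ι`, so `(μ ∘ ι)^n v = ι v` would give a fixed point of `ι` or of `μ`. Choosing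
one cycle out of each such pair uses every path and every matching edge exactly once.
-/

open Finset Function

theorem List.sum_countP_eq_sum_map_card {α β : Type*} [Fintype β] (l : List α) (p : β → α → Bool) :
    ∑ b, l.countP (p b) = (l.map fun a => #{b | p b a}).sum := by
  induction l with
  | nil => simp
  | cons a l ih =>
    simp only [List.countP_cons, sum_add_distrib, ih, List.map_cons, List.sum_cons, card_filter]
    rw [add_comm]

theorem List.eq_of_countP_eq_one {α : Type*} {l : List α} {p : α → Bool} (h : l.countP p = 1)
    {a b : α} (ha : a ∈ l) (hb : b ∈ l) (hpa : p a) (hpb : p b) : a = b := by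
  rw [List.countP_eq_length_filter, List.length_eq_one_iff] at h
  obtain ⟨c, hc⟩ := h
  have h1 : a ∈ l.filter p := List.mem_filter.mpr ⟨ha, hpa⟩
  have h2 : b ∈ l.filter p := List.mem_filter.mpr ⟨hb, hpb⟩
  rw [hc, List.mem_singleton] at h1 h2
  rw [h1, h2]

theorem Function.Injective.existsUnique_eq_or_eq {α β : Type*} {g : β → α} (hg : Injective g)
    {x y : α} (h : x ∈ Set.range g ↔ y ∉ Set.range g) : ∃! b, g b = x ∨ g b = y := by
  by_cases hx : x ∈ Set.range g
  · obtain ⟨b, rfl⟩ := hx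
    refine ⟨b, .inl rfl, fun b' hb' => ?_⟩
    rcases hb' with hb' | rfl
    · exact hg hb'
    · exact absurd ⟨b', rfl⟩ (h.mp ⟨b, rfl⟩)
  · obtain ⟨b, rfl⟩ := not_not.mp (mt h.mpr hx)
    refine ⟨b, .inr rfl, fun b' hb' => ?_⟩
    rcases hb' with rfl | hb'
    · exact absurd ⟨b', rfl⟩ hx
    · exact hg hb'

theorem Function.Involutive.sym2_eq_iff {α : Type*} {f : α → α} (hf : Involutive f) {x y : α} :
    s(x, f x) = s(y, f y) ↔ x = y ∨ x = f y := by
  rw [Sym2.eq_iff]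
  constructor
  · rintro (⟨h, -⟩ | ⟨h, -⟩)
    exacts [.inl h, .inr h]
  · rintro (rfl | rfl)
    exacts [.inl ⟨rfl, rfl⟩, .inr ⟨rfl, hf y⟩]

namespace SimpleGraph

variable {V : Type*} {H : SimpleGraph V}

theorem Walk.IsPath.ne_of_length_ne_zero {u v : V} {p : H.Walk u v} (hp : p.IsPath)
    (hlen : p.length ≠ 0) : u ≠ v := by
  rintro rfl
  exact hlen (Walk.length_eq_zero_iff.mpr (Walk.isPath_iff_nil.mp hp))

theorem Walk.IsTrail.odd_countP_edges_iff [DecidableEq V] {u v : V} {p : H.Walk u v}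
    (hp : p.IsTrail) (huv : u ≠ v) (x : V) :
    Odd (p.edges.countP (x ∈ ·)) ↔ x = u ∨ x = v := by
  rw [← Nat.not_even_iff_odd, hp.even_countP_edges_iff, not_imp_comm, not_and_or, not_not, not_not]
  tauto

section EdgeDecomposition

variable {D : List (Σ u v, H.Walk u v)} (htrail : ∀ p ∈ D, p.2.2.IsTrail)
  (hpw : D.Pairwise fun p q => ∀ e ∈ p.2.2.edges, e ∉ q.2.2.edges)
include htrail hpw

theorem nodup_flatMap_edges : (D.flatMap (·.2.2.edges)).Nodup :=
  List.nodup_flatMap.mpr ⟨fun p hp => (htrail p hp).edges_nodup, hpw.imp fun h _ => h _⟩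

variable [Fintype V] [DecidableEq V] [DecidableRel H.Adj]
  (hpart : ∀ e, e ∈ H.edgeSet ↔ ∃ p ∈ D, e ∈ p.2.2.edges)
include hpart

theorem card_edgeFinset_eq_sum_length : #H.edgeFinset = (D.map (·.2.2.length)).sum := by
  have hE : (D.flatMap (·.2.2.edges)).toFinset = H.edgeFinset := by ext; simp [hpart]
  rw [← hE, List.toFinset_card_of_nodup (nodup_flatMap_edges htrail hpw), List.length_flatMap]
  simp

theorem degree_eq_sum_countP_edges (v : V) :
    H.degree v = (D.map fun p => p.2.2.edges.countP (v ∈ ·)).sum := by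
  rw [← card_incidenceFinset_eq_degree]
  trans (D.flatMap (·.2.2.edges)).countP (v ∈ ·)
  · rw [List.countP_eq_length_filter,
      ← List.toFinset_card_of_nodup ((nodup_flatMap_edges htrail hpw).filter _)]
    congr 1
    ext e
    simp [incidenceSet, hpart]
  · exact List.countP_flatMap

theorem exists_mem_odd_countP_edges {v : V} (hv : Odd (H.degree v)) :
    ∃ p ∈ D, Odd (p.2.2.edges.countP (v ∈ ·)) := by
  by_contra! h
  refine Nat.not_even_iff_odd.mpr hv ?_
  rw [degree_eq_sum_countP_edges htrail hpw hpart, ← AddSubmonoid.mem_even]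
  refine AddSubmonoid.list_sum_mem _ ?_
  simpa only [List.forall_mem_map, AddSubmonoid.mem_even, ← Nat.not_odd_iff_even] using h

end EdgeDecomposition

theorem countP_endpoints_eq_one [Fintype V] [DecidableEq V] [DecidableRel H.Adj]
    {D : List (Σ u v, H.Walk u v)} {d : ℕ} (hd : Odd d) (hreg : H.IsRegularOfDegree d)
    (hpath : ∀ p ∈ D, p.2.2.IsPath ∧ p.2.2.length = d)
    (hpart : ∀ e, e ∈ H.edgeSet ↔ ∃ p ∈ D, e ∈ p.2.2.edges)
    (hpw : D.Pairwise fun p q => ∀ e ∈ p.2.2.edges, e ∉ q.2.2.edges) (v : V) :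
    D.countP (fun p => decide (p.1 = v ∨ p.2.1 = v)) = 1 := by
  have htrail : ∀ p ∈ D, p.2.2.IsTrail := fun p hp => (hpath p hp).1.isTrail
  have hne : ∀ p ∈ D, p.1 ≠ p.2.1 := fun p hp =>
    (hpath p hp).1.ne_of_length_ne_zero ((hpath p hp).2 ▸ hd.pos.ne')
  have hpos (w : V) : 1 ≤ D.countP (fun p => decide (p.1 = w ∨ p.2.1 = w)) := by
    obtain ⟨p, hp, hodd⟩ :=
      exists_mem_odd_countP_edges htrail hpw hpart ((hreg.degree_eq w).symm ▸ hd)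
    refine List.countP_pos_iff.mpr ⟨p, hp, decide_eq_true ?_⟩
    exact (((htrail p hp).odd_countP_edges_iff (hne p hp) w).mp hodd).imp Eq.symm Eq.symm
  have hcard : Fintype.card V = 2 * D.length := by
    have h := H.sum_degrees_eq_twice_card_edges
    rw [card_edgeFinset_eq_sum_length htrail hpw hpart,
      List.map_congr_left fun p hp => (hpath p hp).2] at h
    simp only [hreg.degree_eq, sum_const, card_univ, smul_eq_mul, List.map_const',
      List.sum_replicate] at h
    exact Nat.eq_of_mul_eq_mul_right hd.pos (by rw [h]; ring)
  have hsum : ∑ w, D.countP (fun p => decide (p.1 = w ∨ p.2.1 = w)) = ∑ _w : V, 1 := by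
    have hends (p) (hp : p ∈ D) : #{w | p.1 = w ∨ p.2.1 = w} = 2 := by
      rw [← card_pair (hne p hp)]
      congr 1
      ext
      simp [eq_comm]
    simp only [List.sum_countP_eq_sum_map_card, decide_eq_true_eq]
    rw [List.map_congr_left hends]
    simp [hcard, mul_comm]
  exact ((sum_eq_sum_iff_of_le fun w _ => hpos w).mp hsum.symm v (mem_univ v)).symm

variable {G : SimpleGraph V} {M : G.Subgraph}

theorem Subgraph.IsPerfectMatching.exists_perm (hM : M.IsPerfectMatching) :
    ∃ μ : Equiv.Perm V, Involutive μ ∧ (∀ v, μ v ≠ v) ∧ ∀ v w, M.Adj v w ↔ w = μ v := by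
  choose μ hμ huniq using Subgraph.isPerfectMatching_iff.mp hM
  have hμM (v w : V) : M.Adj v w ↔ w = μ v := ⟨huniq v w, (· ▸ hμ v)⟩
  have hinv : Involutive μ := fun v => ((hμM _ _).mp (hμ v).symm).symm
  exact ⟨hinv.toPerm, hinv, fun v => (hμ v).ne.symm, hμM⟩

theorem Subgraph.IsPerfectMatching.isRegularOfDegree_deleteEdges [Fintype V] [DecidableEq V]
    [DecidableRel G.Adj] [DecidableRel (G.deleteEdges M.edgeSet).Adj] (hM : M.IsPerfectMatching)
    {d : ℕ} (hreg : G.IsRegularOfDegree (d + 1)) :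
    (G.deleteEdges M.edgeSet).IsRegularOfDegree d := by
  intro v
  obtain ⟨w, hvw, huniq⟩ := Subgraph.isPerfectMatching_iff.mp hM v
  have hnbr : (G.deleteEdges M.edgeSet).neighborFinset v = (G.neighborFinset v).erase w := by
    ext u
    simp only [mem_neighborFinset, mem_erase]
    rw [SimpleGraph.deleteEdges_adj, Subgraph.mem_edgeSet]
    exact ⟨fun h => ⟨fun hu => h.2 (hu ▸ hvw), h.1⟩, fun h => ⟨h.2, fun hu => h.1 (huniq u hu)⟩⟩
  rw [← card_neighborFinset_eq_degree, hnbr, card_erase_of_mem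
    ((mem_neighborFinset _ _ _).mpr (M.adj_sub hvw)), card_neighborFinset_eq_degree,
    hreg.degree_eq, Nat.add_sub_cancel]

theorem mem_edgeSet_iff_existsUnique_of_deleteEdges {β : Type*} {s : Set (Sym2 V)}
    (hs : s ⊆ G.edgeSet) {D : List (Σ u v, (G.deleteEdges s).Walk u v)}
    (hpart : ∀ e, e ∈ (G.deleteEdges s).edgeSet ↔ ∃ p ∈ D, e ∈ p.2.2.edges)
    (hpw : D.Pairwise fun p q => ∀ e ∈ p.2.2.edges, e ∉ q.2.2.edges)
    {Pf : β → Σ u v, (G.deleteEdges s).Walk u v} {ef : β → Sym2 V}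
    (hPf : ∀ b, Pf b ∈ D) (hef : ∀ b, ef b ∈ s)
    (hPfD : ∀ p ∈ D, ∃! b, Pf b = p) (hefs : ∀ e ∈ s, ∃! b, ef b = e) (e : Sym2 V) :
    e ∈ G.edgeSet ↔ ∃! b, e ∈ (Pf b).2.2.edges ∨ e = ef b := by
  have hwalk (b : β) (he : e ∈ (Pf b).2.2.edges) : e ∈ G.edgeSet ∧ e ∉ s := by
    simpa [edgeSet_deleteEdges] using (Pf b).2.2.edges_subset_edgeSet he
  have hdisj : ∀ p ∈ D, ∀ q ∈ D, e ∈ p.2.2.edges → e ∈ q.2.2.edges → p = q := by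
    have : Std.Symm fun p q : Σ u v, (G.deleteEdges s).Walk u v =>
        ∀ e ∈ p.2.2.edges, e ∉ q.2.2.edges := ⟨fun _ _ h e hq hp => h e hp hq⟩
    exact fun p hp q hq hep heq => by_contra fun hpq => hpw.forall hp hq hpq e hep heq
  refine ⟨fun he => ?_, ?_⟩
  · by_cases hes : e ∈ s
    · obtain ⟨b, hb, huniq⟩ := hefs e hes
      exact ⟨b, .inr hb.symm, fun b' hb' =>
        huniq b' (hb'.resolve_left fun h => (hwalk b' h).2 hes).symm⟩
    · obtain ⟨p, hp, hep⟩ := (hpart e).mp (by simpa [edgeSet_deleteEdges] using ⟨he, hes⟩)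
      obtain ⟨b, hb, huniq⟩ := hPfD p hp
      refine ⟨b, .inl (hb ▸ hep), fun b' hb' => huniq b' ?_⟩
      rcases hb' with h | rfl
      · exact hdisj _ (hPf b') _ hp h hep
      · exact absurd (hef b') hes
  · rintro ⟨b, hb | rfl, -⟩
    exacts [(hwalk b hb).1, hs (hef b)]

end SimpleGraph

theorem exists_endpoint_partner {β V : Type*} [DecidableEq V] {D : List β} {ends : β → Sym2 V}
    (hne : ∀ b ∈ D, ¬ (ends b).IsDiag) (hcount : ∀ v, D.countP (fun b => v ∈ ends b) = 1) :
    ∃ (P : V → β) (ι : Equiv.Perm V), Involutive ι ∧ (∀ v, ι v ≠ v) ∧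
      ∀ v, P v ∈ D ∧ ends (P v) = s(v, ι v) ∧ ∀ b ∈ D, P v = b ↔ v ∈ ends b := by
  have hex (v : V) : ∃ b ∈ D, v ∈ ends b := by
    obtain ⟨b, hb, hvb⟩ := List.countP_pos_iff.mp ((hcount v).symm ▸ Nat.one_pos)
    exact ⟨b, hb, of_decide_eq_true hvb⟩
  choose P hPD hPv using hex
  have hP (v : V) (b : β) (hb : b ∈ D) : P v = b ↔ v ∈ ends b :=
    ⟨(· ▸ hPv v), fun hvb => List.eq_of_countP_eq_one (hcount v) (hPD v) hb
      (decide_eq_true (hPv v)) (decide_eq_true hvb)⟩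
  let ι (v : V) : V := Sym2.Mem.other (hPv v)
  have hends (v : V) : ends (P v) = s(v, ι v) := (Sym2.other_spec (hPv v)).symm
  have hι : Involutive ι := by
    intro v
    have hPι : P (ι v) = P v := (hP _ _ (hPD v)).mpr (hends v ▸ Sym2.mem_mk_right v (ι v))
    have h := hends (ι v)
    rw [hPι, hends v, Sym2.eq_swap, Sym2.congr_right] at h
    exact h.symm
  refine ⟨P, hι.toPerm, hι, fun v hv => hne _ (hPD v) ?_, fun v => ⟨hPD v, hends v, hP v⟩⟩
  rw [hends v]
  exact Sym2.mk_isDiag_iff.mpr hv.symm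

theorem existsUnique_apply_eq_of_partner {β γ V : Type*} {D : List β} {ends : β → Sym2 V}
    {P : V → β} {ι : V → V}
    (hP : ∀ v, P v ∈ D ∧ ends (P v) = s(v, ι v) ∧ ∀ b ∈ D, P v = b ↔ v ∈ ends b)
    {g : γ → V} (hg : Injective g) (hRι : ∀ x, ι x ∈ Set.range g ↔ x ∉ Set.range g)
    {b : β} (hb : b ∈ D) : ∃! c, P (g c) = b := by
  obtain ⟨v, rfl⟩ : ∃ v, P v = b := ⟨_, ((hP _).2.2 b hb).mpr (ends b).out_fst_mem⟩
  have key (c : γ) : P (g c) = P v ↔ g c = v ∨ g c = ι v := by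
    rw [(hP (g c)).2.2 _ (hP v).1, (hP v).2.1, Sym2.mem_iff]
  rw [existsUnique_congr key]
  exact hg.existsUnique_eq_or_eq (by have := hRι v; tauto)

namespace Equiv.Perm

variable {α : Type*}

theorem exists_sigma_zmod_equiv [Finite α] (σ : Perm α) :
    ∃ (N : ℕ) (r : Fin N → ℕ) (g : (Σ t : Fin N, ZMod (r t)) ≃ α),
      (∀ t, NeZero (r t)) ∧ ∀ t i, g ⟨t, i + 1⟩ = σ (g ⟨t, i⟩) := by
  obtain ⟨N, ⟨e⟩⟩ := Finite.exists_equiv_fin (MulAction.orbitRel.Quotient (Subgroup.zpowers σ) α)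
  refine ⟨N, fun t => minimalPeriod (σ • ·) (e.symm t).out,
    ((Equiv.sigmaCongrLeft e.symm).trans (Equiv.sigmaCongrRight fun q =>
      (MulAction.orbitZPowersEquiv σ q.out).symm)).trans
      (MulAction.selfEquivSigmaOrbits _ α).symm, fun t => inferInstance, fun t i => ?_⟩
  obtain ⟨k, rfl⟩ := ZMod.intCast_surjective i
  change ((MulAction.orbitZPowersEquiv σ (e.symm t).out).symm ((k : ZMod _) + 1) : α) =
    σ ((MulAction.orbitZPowersEquiv σ (e.symm t).out).symm (k : ZMod _) : α)
  rw [add_comm, ← Int.cast_one, ← Int.cast_add, MulAction.orbitZPowersEquiv_symm_apply',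
    MulAction.orbitZPowersEquiv_symm_apply', zpow_one_add, mul_smul]
  rfl

variable {ι μ : Perm α}

theorem apply_zpow_apply_of_involutive (hι : Involutive ι) (hμ : Involutive μ) (n : ℤ) (x : α) :
    ι (((μ * ι) ^ n) x) = ((μ * ι) ^ (-n)) (ι x) := by
  have hι2 : ι * ι = 1 := Equiv.ext fun x => hι x
  have hιinv : ι⁻¹ = ι := inv_eq_of_mul_eq_one_left hι2
  have hμinv : μ⁻¹ = μ := inv_eq_of_mul_eq_one_left (Equiv.ext fun x => hμ x)
  have hconj : ι * (μ * ι) * ι⁻¹ = (μ * ι)⁻¹ := by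
    simp only [mul_inv_rev, hιinv, hμinv, mul_assoc, hι2, mul_one]
  calc ι (((μ * ι) ^ n) x) = (ι * (μ * ι) ^ n * ι⁻¹) (ι x) := by simp
    _ = ((μ * ι) ^ (-n)) (ι x) := by rw [← conj_zpow, hconj, zpow_neg, inv_zpow]

theorem not_sameCycle_mul_apply (hι : Involutive ι) (hμ : Involutive μ) (hιfix : ∀ x, ι x ≠ x)
    (hμfix : ∀ x, μ x ≠ x) (x : α) : ¬ (μ * ι).SameCycle x (ι x) := by
  rintro ⟨n, hn⟩
  obtain ⟨j, rfl | rfl⟩ := n.even_or_odd'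
  · refine hιfix (((μ * ι) ^ j) x) ?_
    rw [apply_zpow_apply_of_involutive hι hμ, ← hn, ← Perm.mul_apply, ← zpow_add]
    ring_nf
  · have hy : ι (((μ * ι) ^ j) x) = (μ * ι) (((μ * ι) ^ j) x) := by
      rw [apply_zpow_apply_of_involutive hι hμ, ← hn, ← Perm.mul_apply, ← zpow_add,
        ← Perm.mul_apply, ← zpow_one_add]
      ring_nf
    refine hμfix (ι (((μ * ι) ^ j) x)) ?_
    conv_rhs => rw [hy]
    rfl

theorem exists_invariant_set_of_involutive (hι : Involutive ι) (hμ : Involutive μ)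
    (hfree : ∀ x, ¬ (μ * ι).SameCycle x (ι x)) :
    ∃ T : Set α, (∀ x, μ (ι x) ∈ T ↔ x ∈ T) ∧ ∀ x, ι x ∈ T ↔ x ∉ T := by
  let q : α → Quotient (SameCycle.setoid (μ * ι)) := Quotient.mk _
  have hq (x : α) : q (μ (ι x)) = q x := Quotient.sound (sameCycle_apply_left.mpr (.refl _ x))
  have hqι (x : α) : q (ι (μ (ι x))) = q (ι x) := by
    have h := apply_zpow_apply_of_involutive hι hμ 1 x
    rw [zpow_one] at h
    exact Quotient.sound (h ▸ sameCycle_zpow_left.mpr (.refl _ _))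
  have hne (x : α) : q x ≠ q (ι x) := fun h => hfree x (Quotient.exact h)
  let R := WellOrderingRel (α := Quotient (SameCycle.setoid (μ * ι)))
  refine ⟨{x | R (q x) (q (ι x))}, fun x => ?_, fun x => ?_⟩
  · simp only [Set.mem_ofPred_eq, hq, hqι]
  · simp only [Set.mem_ofPred_eq, hι x]
    exact ⟨asymm, fun h => ((trichotomous_of R _ _).resolve_left h).resolve_left (hne x)⟩

theorem exists_zmod_cycles_of_involutive [Finite α] (hι : Involutive ι) (hμ : Involutive μ)
    (hιfix : ∀ x, ι x ≠ x) (hμfix : ∀ x, μ x ≠ x) :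
    ∃ (N : ℕ) (r : Fin N → ℕ) (g : (Σ t : Fin N, ZMod (r t)) → α),
      (∀ t, 1 ≤ r t) ∧ Injective g ∧ (∀ t i, g ⟨t, i + 1⟩ = μ (ι (g ⟨t, i⟩))) ∧
      (∀ x, μ (ι x) ∈ Set.range g ↔ x ∈ Set.range g) ∧
      ∀ x, ι x ∈ Set.range g ↔ x ∉ Set.range g := by
  obtain ⟨T, hTσ, hTι⟩ :=
    exists_invariant_set_of_involutive hι hμ (not_sameCycle_mul_apply hι hμ hιfix hμfix)
  obtain ⟨N, r, g, hr, hsucc⟩ :=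
    exists_sigma_zmod_equiv ((μ * ι).subtypePerm (p := (· ∈ T)) hTσ)
  have hrange : Set.range (Subtype.val ∘ g) = T := by
    rw [Set.range_comp, g.range_eq_univ, Set.image_univ, Subtype.range_coe]
  refine ⟨N, r, Subtype.val ∘ g, fun t => NeZero.one_le, Subtype.val_injective.comp g.injective,
    fun t i => congrArg Subtype.val (hsucc t i), ?_, ?_⟩ <;> rw [hrange]
  exacts [hTσ, hTι]

theorem existsUnique_sym2_eq_of_involutive (hι : Involutive ι) (hμ : Involutive μ) {β : Type*}
    {g : β → α} (hg : Injective g) (hRσ : ∀ x, μ (ι x) ∈ Set.range g ↔ x ∈ Set.range g)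
    (hRι : ∀ x, ι x ∈ Set.range g ↔ x ∉ Set.range g) (x : α) :
    ∃! b, s(ι (g b), μ (ι (g b))) = s(x, μ x) := by
  have key (b : β) : s(ι (g b), μ (ι (g b))) = s(x, μ x) ↔ g b = ι x ∨ g b = ι (μ x) := by
    rw [hμ.sym2_eq_iff, hι.eq_iff, hι.eq_iff]
  rw [existsUnique_congr key]
  refine hg.existsUnique_eq_or_eq ?_
  rw [hRι x, ← hRσ (ι (μ x)), hι (μ x), hμ x]

end Equiv.Perm

/-- If `G` is `2k`-regular with a perfect matching `M`, and `D` is a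
decomposition of `G - M` into paths of length `2k-1`, then every vertex of `G` is
an end vertex of exactly one path of `D`, and consequently `E(G)` partitions into
closed trails alternating between paths of `D` and edges of `M`. -/
theorem stmt11 {V : Type*} [Fintype V] [DecidableEq V] (k : ℕ) (hk : 3 ≤ k)
    (G : SimpleGraph V) [DecidableRel G.Adj]
    (hreg : G.IsRegularOfDegree (2 * k))
    (M : G.Subgraph) (hM : M.IsPerfectMatching)
    (D : List (Σ u : V, Σ v : V, (G.deleteEdges M.edgeSet).Walk u v))
    (hpath : ∀ p ∈ D, p.2.2.IsPath ∧ p.2.2.length = 2 * k - 1)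
    (hpart : ∀ e, e ∈ (G.deleteEdges M.edgeSet).edgeSet ↔ ∃ p ∈ D, e ∈ p.2.2.edges)
    (hpw : D.Pairwise fun p q => ∀ e ∈ p.2.2.edges, e ∉ q.2.2.edges) :
    (∀ v : V, D.countP (fun p => decide (p.1 = v ∨ p.2.1 = v)) = 1) ∧
    ∃ (N : ℕ) (r : Fin N → ℕ),
      (∀ t, 1 ≤ r t) ∧
      ∃ (Pf : ∀ t : Fin N, ZMod (r t) → Σ u : V, Σ v : V, (G.deleteEdges M.edgeSet).Walk u v)
        (ef : ∀ t : Fin N, ZMod (r t) → Sym2 V),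
        -- the paths used in the closed trails are paths of the decomposition `D`
        (∀ t i, Pf t i ∈ D) ∧
        -- the connecting edges are (distinct) edges of the matching `M`
        (∀ t i, ef t i ∈ M.edgeSet) ∧
        Function.Injective (fun ti : Σ t : Fin N, ZMod (r t) => ef ti.1 ti.2) ∧
        -- each `e_i` joins an end vertex of `P_i` to an end vertex of `P_{i+1}`
        (∀ t i, ∃ x y, ef t i = s(x, y) ∧
          (x = (Pf t i).1 ∨ x = (Pf t i).2.1) ∧
          (y = (Pf t (i + 1)).1 ∨ y = (Pf t (i + 1)).2.1)) ∧
        -- the closed trails partition the edge set of `G`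
        (∀ e, e ∈ G.edgeSet ↔
          ∃! ti : Σ t : Fin N, ZMod (r t),
            e ∈ (Pf ti.1 ti.2).2.2.edges ∨ e = ef ti.1 ti.2) := by
  classical
  have hreg' := hM.isRegularOfDegree_deleteEdges (d := 2 * k - 1)
    (by rwa [Nat.sub_add_cancel (by omega)])
  have hcount := SimpleGraph.countP_endpoints_eq_one ⟨k - 1, by omega⟩ hreg' hpath hpart hpw
  refine ⟨hcount, ?_⟩
  obtain ⟨P, ι, hι, hιfix, hP⟩ := exists_endpoint_partner (ends := fun p => s(p.1, p.2.1))
    (fun p hp => Sym2.mk_isDiag_iff.not.mpr <|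
      (hpath p hp).1.ne_of_length_ne_zero ((hpath p hp).2 ▸ by omega))
    (fun v => (List.countP_congr fun p _ => by
      simp only [decide_eq_true_eq, Sym2.mem_iff, @eq_comm _ v]).trans (hcount v))
  have hends (v : V) : s((P v).1, (P v).2.1) = s(v, ι v) := (hP v).2.1
  obtain ⟨μ, hμ, hμfix, hμM⟩ := hM.exists_perm
  obtain ⟨N, r, g, hr, hg, hsucc, hRσ, hRι⟩ :=
    Equiv.Perm.exists_zmod_cycles_of_involutive hι hμ hιfix hμfix
  have hU := Equiv.Perm.existsUnique_sym2_eq_of_involutive hι hμ hg hRσ hRι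
  refine ⟨N, r, hr, fun t i => P (g ⟨t, i⟩), fun t i => s(ι (g ⟨t, i⟩), μ (ι (g ⟨t, i⟩))),
    fun t i => (hP _).1, fun t i => (hμM _ _).mpr rfl, fun a b hab => (hU _).unique hab rfl,
    fun t i => ⟨_, _, rfl, ?_, ?_⟩,
    SimpleGraph.mem_edgeSet_iff_existsUnique_of_deleteEdges M.edgeSet_subset hpart hpw
      (fun _ => (hP _).1) (fun _ => (hμM _ _).mpr rfl)
      (fun _ => existsUnique_apply_eq_of_partner (ends := fun p => s(p.1, p.2.1)) hP hg hRι)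
      (fun e he => ?_)⟩
  · exact Sym2.mem_iff.mp (hends _ ▸ Sym2.mem_mk_right _ _)
  · rw [← hsucc]
    exact Sym2.mem_iff.mp (hends _ ▸ Sym2.mem_mk_left _ _)
  · induction e using Sym2.ind with
    | _ x y => rw [(hμM x y).mp he]; exact hU x
end

section
/- Let k > 3 and let P, P′ be two edge-disjoint paths, each of length 2k−1, in a graph of girth at least 2k−2, such that there is an edge e = xx′ with x an end vertex of P, x′ an end vertex of P′, and both x′ ∈ V(P) is internal in P and x ∈ V(P′) is internal in P′ (i.e., e is trapped). If |V(P) ∩ V(P′)| > 2, then |V(P) ∩ V(P′)| = 3, the subpath of P from x to x′ and the subpath of P′ from x to x′ each have length 2k−2, and the middle vertex of the subpath P(x,x′) equals the middle vertex of the subpath P′(x,x′). -/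
/-!
Split `P` at `x'` and `P'` at `x`. Two edge-disjoint trails joining distinct vertices, or two
such trails closed up by `e`, contain a cycle, so their total length is at least `2k - 2`.
Closing `P(x', x)` or `P'(x', x)` with `e` shows that both have length at least `2k - 3`. For a
common vertex `y ∉ {x, x'}`, the four closed trails formed by the pieces of `P` and `P'` between
`x'`, `y` and `x` (two of them through `e`) then pin down every position: `x'` is the second
vertex of `P`, `x` the second-to-last vertex of `P'`, and `y` lies at distance `k - 1` from `x'`
along both. In particular `y` is unique.
-/

open SimpleGraph Walk

lemma Finset.exists_mem_ne_ne_of_two_lt_card {α : Type*} [DecidableEq α] {s : Finset α}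
    (hs : 2 < s.card) (a b : α) : ∃ c ∈ s, c ≠ a ∧ c ≠ b := by
  by_contra! h
  have : s ⊆ {a, b} := fun c hc => by
    rw [Finset.mem_insert, Finset.mem_singleton]
    by_contra! hc'
    exact hc'.2 (h c hc hc'.1)
  exact (Finset.card_le_card this |>.trans Finset.card_le_two).not_gt hs

lemma Finset.card_eq_three_of_forall_ne_ne {α : Type*} [DecidableEq α] {s : Finset α}
    (hs : 2 < s.card) {a b c : α} (h : ∀ d ∈ s, d ≠ a → d ≠ b → d = c) : s.card = 3 := by
  have : s ⊆ {a, b, c} := fun d hd => by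
    simp only [Finset.mem_insert, Finset.mem_singleton]
    tauto
  exact le_antisymm (Finset.card_le_card this |>.trans Finset.card_le_three) hs

namespace SimpleGraph

variable {V : Type*} {G : SimpleGraph V}

namespace Walk

variable {u v w u' v' : V}

lemma IsTrail.append_of_disjoint {p : G.Walk u v} {q : G.Walk v w} (hp : p.IsTrail)
    (hq : q.IsTrail) (hpq : p.edges.Disjoint q.edges) : (p.append q).IsTrail :=
  ⟨by rw [edges_append]; exact hp.edges_nodup.append hq.edges_nodup hpq⟩

/-- Removing the first edge of a closed trail and shortcutting the rest to a path leaves a cycle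
through that edge. -/
lemma IsTrail.girth_le_length {c : G.Walk u u} (hc : c.IsTrail) (hc₀ : ¬c.Nil) :
    G.girth ≤ c.length := by
  classical
  cases c with
  | nil => exact absurd Nil.nil hc₀
  | cons h p =>
    rw [isTrail_cons] at hc
    have hcyc : (cons h p.bypass).IsCycle :=
      (cons_isCycle_iff _ h).2
        ⟨p.bypass_isPath, fun hm => hc.2 (p.edges_bypass_subset_edges hm)⟩
    have hcyc_le := G.girth_le_length hcyc
    have hbypass_le := p.length_bypass_le_length
    rw [length_cons] at hcyc_le ⊢
    omega

lemma IsTrail.exists_subtrail {p : G.Walk u v} (hp : p.IsTrail) {s t : ℕ} (hs : s ≤ p.length)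
    (ht : t ≤ p.length) {a b : V} (ha : p.getVert s = a) (hb : p.getVert t = b) :
    ∃ q : G.Walk a b, q.IsTrail ∧ q.edges ⊆ p.edges ∧ q.length = Nat.dist s t := by
  wlog hst : s ≤ t generalizing s t a b
  · obtain ⟨q, hq, hqp, hql⟩ := this ht hs hb ha (by omega)
    exact ⟨q.reverse, hq.reverse, by rwa [edges_reverse, List.reverse_subset],
      by rw [length_reverse, hql, Nat.dist_comm]⟩
  subst ha hb
  have hsub : ((p.drop s).take (t - s)).IsSubwalk p :=
    (isSubwalk_take _ _).trans (isSubwalk_drop _ _)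
  refine ⟨((p.drop s).take (t - s)).copy rfl (by rw [drop_getVert, Nat.add_sub_cancel' hst]),
    ?_, ?_, ?_⟩
  · rw [isTrail_copy]
    exact ⟨hsub.edges_isInfix.sublist.nodup hp.edges_nodup⟩
  · rw [edges_copy]
    exact hsub.edges_subset
  · rw [length_copy, take_length, drop_length, Nat.dist]
    omega

lemma getVert_dropUntil [DecidableEq V] (p : G.Walk u v) (h : w ∈ p.support) (n : ℕ) :
    (p.dropUntil w h).getVert n = p.getVert ((p.takeUntil w h).length + n) := by
  have h_split := congrArg (fun q : G.Walk u v => q.getVert ((p.takeUntil w h).length + n))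
    (p.take_spec h)
  rw [getVert_append, if_neg (by omega), Nat.add_sub_cancel_left] at h_split
  exact h_split

end Walk

lemma girth_le_length_add_length {p : G.Walk u v} {q : G.Walk v u} (hp : p.IsTrail)
    (hq : q.IsTrail) (hpq : p.edges.Disjoint q.edges) (huv : u ≠ v) :
    G.girth ≤ p.length + q.length := by
  have hnil : ¬(p.append q).Nil := fun h => huv (nil_append_iff.1 h).1.eq
  simpa using (hp.append_of_disjoint hq hpq).girth_le_length hnil

lemma girth_le_length_add_length_add_one {p : G.Walk u v} {q : G.Walk v w} (h : G.Adj w u)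
    (hp : p.IsTrail) (hq : q.IsTrail) (hpq : p.edges.Disjoint q.edges)
    (hpe : s(w, u) ∉ p.edges) (hqe : s(w, u) ∉ q.edges) :
    G.girth ≤ p.length + q.length + 1 := by
  have hc : (cons h (p.append q)).IsTrail := by
    rw [isTrail_cons, edges_append, List.mem_append]
    exact ⟨hp.append_of_disjoint hq hpq, by tauto⟩
  simpa [add_comm] using hc.girth_le_length not_nil_cons

lemma girth_le_dist_add_dist {P : G.Walk u v} {P' : G.Walk u' v'} (hP : P.IsTrail)
    (hP' : P'.IsTrail) (hPP' : P.edges.Disjoint P'.edges) {a b : V} (hab : a ≠ b)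
    {s₁ s₂ t₁ t₂ : ℕ} (hs₁ : s₁ ≤ P.length) (hs₂ : s₂ ≤ P.length) (ht₁ : t₁ ≤ P'.length)
    (ht₂ : t₂ ≤ P'.length) (ha : P.getVert s₁ = a) (hb : P.getVert s₂ = b)
    (ha' : P'.getVert t₁ = a) (hb' : P'.getVert t₂ = b) :
    G.girth ≤ Nat.dist s₁ s₂ + Nat.dist t₁ t₂ := by
  obtain ⟨p, hp, hpP, hpl⟩ := hP.exists_subtrail hs₁ hs₂ ha hb
  obtain ⟨q, hq, hqP', hql⟩ := hP'.exists_subtrail ht₂ ht₁ hb' ha'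
  rw [← hpl, Nat.dist_comm, ← hql]
  exact girth_le_length_add_length hp hq (fun _ h₁ h₂ => hPP' (hpP h₁) (hqP' h₂)) hab

lemma girth_le_dist_add_dist_add_one {P : G.Walk u v} {P' : G.Walk u' v'} (hP : P.IsTrail)
    (hP' : P'.IsTrail) (hPP' : P.edges.Disjoint P'.edges) {a b c : V} (h : G.Adj b a)
    (hPe : s(b, a) ∉ P.edges) (hP'e : s(b, a) ∉ P'.edges)
    {s₁ s₂ t₁ t₂ : ℕ} (hs₁ : s₁ ≤ P.length) (hs₂ : s₂ ≤ P.length) (ht₁ : t₁ ≤ P'.length)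
    (ht₂ : t₂ ≤ P'.length) (ha : P.getVert s₁ = a) (hc : P.getVert s₂ = c)
    (hc' : P'.getVert t₁ = c) (hb' : P'.getVert t₂ = b) :
    G.girth ≤ Nat.dist s₁ s₂ + Nat.dist t₁ t₂ + 1 := by
  obtain ⟨p, hp, hpP, hpl⟩ := hP.exists_subtrail hs₁ hs₂ ha hc
  obtain ⟨q, hq, hqP', hql⟩ := hP'.exists_subtrail ht₁ ht₂ hc' hb'
  rw [← hpl, ← hql]
  exact girth_le_length_add_length_add_one h hp hq (fun _ h₁ h₂ => hPP' (hpP h₁) (hqP' h₂))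
    (fun hm => hPe (hpP hm)) (fun hm => hP'e (hqP' hm))

lemma trapped_positions {k : ℕ} (hk : 3 < k) (hg : 2 * k - 2 ≤ G.girth) {u x x' w y : V}
    {P : G.Walk u x} {P' : G.Walk x' w} (hP : P.IsTrail) (hP' : P'.IsTrail)
    (hPlen : P.length = 2 * k - 1) (hP'len : P'.length = 2 * k - 1)
    (hPP' : P.edges.Disjoint P'.edges) (he : G.Adj x x')
    (heP : s(x, x') ∉ P.edges) (heP' : s(x, x') ∉ P'.edges)
    (hx'u : x' ≠ u) (hx'x : x' ≠ x) (hxw : x ≠ w) (hyx : y ≠ x) (hyx' : y ≠ x')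
    {i j s t : ℕ} (hiL : i ≤ P.length) (hjL : j ≤ P'.length) (hsL : s ≤ P.length)
    (htL : t ≤ P'.length) (hi : P.getVert i = x') (hj : P'.getVert j = x)
    (hs : P.getVert s = y) (ht : P'.getVert t = y) :
    i = 1 ∧ j = 2 * k - 2 ∧ s = k ∧ t = k - 1 := by
  have hx : P.getVert P.length = x := P.getVert_length
  have hx' : P'.getVert 0 = x' := P'.getVert_zero
  have hi₀ : i ≠ 0 := by rintro rfl; exact hx'u (hi ▸ P.getVert_zero)
  have hiL' : i ≠ P.length := by rintro rfl; exact hx'x (hi ▸ hx)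
  have hj₀ : j ≠ 0 := by rintro rfl; exact he.ne (hj ▸ hx')
  have hjL' : j ≠ P'.length := by rintro rfl; exact hxw (hj ▸ P'.getVert_length)
  have hsi : s ≠ i := by rintro rfl; exact hyx' (hs ▸ hi)
  have hsL' : s ≠ P.length := by rintro rfl; exact hyx (hs ▸ hx)
  have ht₀ : t ≠ 0 := by rintro rfl; exact hyx' (ht ▸ hx')
  have htj : t ≠ j := by rintro rfl; exact hyx (ht ▸ hj)
  have heP₂ : s(x', x) ∉ P.edges := by rwa [Sym2.eq_swap]
  have heP'₂ : s(x', x) ∉ P'.edges := by rwa [Sym2.eq_swap]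
  have c₁ := girth_le_dist_add_dist hP hP' hPP' hyx' hsL hiL htL (Nat.zero_le _) hs hi ht hx'
  have c₂ := girth_le_dist_add_dist hP hP' hPP' hyx hsL le_rfl htL hjL hs hx ht hj
  have c₃ := girth_le_dist_add_dist_add_one hP hP' hPP' he heP heP' hiL hsL htL hjL hi hs ht hj
  have c₄ := girth_le_dist_add_dist_add_one hP hP' hPP' he.symm heP₂ heP'₂ le_rfl hsL htL
    (Nat.zero_le _) hx hs ht hx'
  have c₅ := girth_le_dist_add_dist_add_one hP hP' hPP' he heP heP' hiL le_rfl hjL hjL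
    hi hx hj hj
  have c₆ := girth_le_dist_add_dist_add_one hP hP' hPP' he heP heP' hiL hiL (Nat.zero_le _) hjL
    hi hi hx' hj
  simp only [Nat.dist, Nat.sub_zero, Nat.zero_sub, Nat.sub_self, add_zero, zero_add]
    at c₁ c₂ c₃ c₄ c₅ c₆
  omega

lemma trapped_segments [DecidableEq V] {k : ℕ} (hk : 3 < k) (hg : 2 * k - 2 ≤ G.girth)
    {u x x' w y : V} {P : G.Walk u x} {P' : G.Walk x' w} (hP : P.IsTrail) (hP' : P'.IsTrail)
    (hPlen : P.length = 2 * k - 1) (hP'len : P'.length = 2 * k - 1)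
    (hPP' : P.edges.Disjoint P'.edges) (he : G.Adj x x')
    (heP : s(x, x') ∉ P.edges) (heP' : s(x, x') ∉ P'.edges)
    (hx' : x' ∈ P.support) (hx'u : x' ≠ u) (hx'x : x' ≠ x) (hx : x ∈ P'.support) (hxw : x ≠ w)
    (hyP : y ∈ P.support) (hyP' : y ∈ P'.support) (hyx : y ≠ x) (hyx' : y ≠ x') :
    (P.dropUntil x' hx').length = 2 * k - 2 ∧ (P'.takeUntil x hx).length = 2 * k - 2 ∧
      (P.dropUntil x' hx').getVert (k - 1) = y ∧ (P'.takeUntil x hx).getVert (k - 1) = y := by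
  obtain ⟨s, hs, hsL⟩ := mem_support_iff_exists_getVert.1 hyP
  obtain ⟨t, ht, htL⟩ := mem_support_iff_exists_getVert.1 hyP'
  obtain ⟨hi, hj, rfl, rfl⟩ := trapped_positions hk hg hP hP' hPlen hP'len hPP' he heP heP'
    hx'u hx'x hxw hyx hyx' (P.length_takeUntil_le_length hx')
    (P'.length_takeUntil_le_length hx) hsL htL (getVert_length_takeUntil hx')
    (getVert_length_takeUntil hx) hs ht
  have hPsplit := congrArg length (P.take_spec hx')
  rw [length_append] at hPsplit
  refine ⟨by omega, hj, ?_, ?_⟩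
  · rw [getVert_dropUntil, hi, ← hs]
    congr 1
    omega
  · rw [getVert_takeUntil hx (by omega), ht]

end SimpleGraph

/-- For `k > 3`, in a graph of girth at least `2k-2`, let `P, P'` be
edge-disjoint paths of length `2k-1`, and `e = xx'` an edge with `x` an end vertex
of `P`, `x'` an end vertex of `P'`, such that `x'` is internal in `P` and `x` is
internal in `P'` (a trapped edge).  If `|V(P) ∩ V(P')| > 2`, then
`|V(P) ∩ V(P')| = 3`, the segments `P(x,x')` and `P'(x,x')` both have length
`2k-2`, and their middle vertices coincide. -/
theorem stmt13 {V : Type*} [DecidableEq V] (k : ℕ) (hk : 3 < k)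
    (G : SimpleGraph V)
    (hgirth : ((2 * k - 2 : ℕ) : ℕ∞) ≤ G.girth)
    {u x x' w : V}
    (P : G.Walk u x) (P' : G.Walk x' w)
    (hP : P.IsPath) (hP' : P'.IsPath)
    (hPlen : P.length = 2 * k - 1) (hP'len : P'.length = 2 * k - 1)
    (hdisj : ∀ e ∈ P.edges, e ∉ P'.edges)
    (he : G.Adj x x')
    (heP : s(x, x') ∉ P.edges) (heP' : s(x, x') ∉ P'.edges)
    (hx' : x' ∈ P.support) (hx'int : x' ≠ u ∧ x' ≠ x)
    (hx : x ∈ P'.support) (hxint : x ≠ x' ∧ x ≠ w)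
    (hbig : 2 < (P.support.toFinset ∩ P'.support.toFinset).card) :
    (P.support.toFinset ∩ P'.support.toFinset).card = 3 ∧
    (P.dropUntil x' hx').length = 2 * k - 2 ∧
    (P'.takeUntil x hx).length = 2 * k - 2 ∧
    (P.dropUntil x' hx').getVert (k - 1) = (P'.takeUntil x hx).getVert (k - 1) := by
  have key {y : V} (hy : y ∈ P.support.toFinset ∩ P'.support.toFinset) (hyx : y ≠ x)
      (hyx' : y ≠ x') := by
    simp only [Finset.mem_inter, List.mem_toFinset] at hy
    exact trapped_segments hk (by exact_mod_cast hgirth) hP.isTrail hP'.isTrail hPlen hP'len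
      hdisj he heP heP' hx' hx'int.1 hx'int.2 hx hxint.2 hy.1 hy.2 hyx hyx'
  obtain ⟨y, hy, hyx, hyx'⟩ := Finset.exists_mem_ne_ne_of_two_lt_card hbig x x'
  obtain ⟨hQ, hT, hQy, hTy⟩ := key hy hyx hyx'
  exact ⟨Finset.card_eq_three_of_forall_ne_ne hbig fun z hz hzx hzx' =>
    (key hz hzx hzx').2.2.1.symm, hQ, hT, hQy.trans hTy.symm⟩
end

section
/- Let k ≥ 3 and let W be an alternating r-closed trail (r ≥ 2) built from r paths P_0,…,P_{r−1} of length 2k−1 and r matching edges e_0,…,e_{r−1}, where e_i joins an end vertex of P_i to an end vertex of P_{i+1} (indices mod r). Suppose for every i, the edge e_i is not trapped in P_i e_i P_{i+1}, i.e., at least one of P_i e_i, e_i P_{i+1} is a path. Then W can be decomposed into r paths of lengths in {2k−1, 2k, 2k+1} such that every path of length 2k+1 has both of its end edges among the matching edges e_0,…,e_{r−1}; consequently each vertex of W is an end vertex of at most one path of length 2k+1 in the decomposition. -/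
/-- `x` is an internal vertex of the path/walk `P`. -/
def IsInternalVertex {V : Type*} {G : SimpleGraph V} {u v : V}
    (P : G.Walk u v) (x : V) : Prop :=
  x ∈ P.support ∧ x ≠ u ∧ x ≠ v

/-- The union of the paths and matching edges of an alternating `r`-closed trail,
as a simple graph. -/
def trailGraph {V : Type*} (G : SimpleGraph V) {r : ℕ} (a b : ZMod r → V)
    (Pf : ∀ i : ZMod r, G.Walk (a i) (b i)) : SimpleGraph V :=
  SimpleGraph.fromEdgeSet
    ((⋃ i, {e | e ∈ (Pf i).edges}) ∪ Set.range (fun i => s(b i, a (i + 1))))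

/-!
Each matching edge `e_i = b_i a_{i+1}` is absorbed by one of its two neighbouring paths: by
`P_{i+1}`, in front, if `a_{i+1}` lies on `P_i`, and by `P_i`, behind, otherwise. In the second
case `P_i e_i` is a path; in the first, `e_i P_{i+1}` is a path because `e_i` is not trapped. If
`P_j` absorbs both `e_{j-1}` and `e_j` it stays a path since these edges are disjoint, so the
pieces are paths of length `2k-1`, `2k` or `2k+1`, the last only when both end edges are
matching edges. A vertex ending two long pieces would lie on one matching edge used by both,
contradicting edge-disjointness.
-/

open SimpleGraph

theorem List.countP_le_one_of_pairwise {α : Type*} {p : α → Bool} :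
    ∀ {l : List α}, l.Pairwise (fun x y => ¬(p x ∧ p y)) → l.countP p ≤ 1
  | [], _ => by simp
  | x :: l, h => by
    rw [List.pairwise_cons] at h
    by_cases hx : p x
    · rw [List.countP_cons_of_pos hx, List.countP_eq_zero.2 fun y hy hy' => h.1 y hy ⟨hx, hy'⟩]
    · rw [List.countP_cons_of_neg hx]
      exact countP_le_one_of_pairwise h.2

namespace SimpleGraph.Walk

variable {V : Type*} {G : SimpleGraph V}

theorem mk_start_getVert_one_mem_edges {u v : V} (p : G.Walk u v) (hp : p.length ≠ 0) :
    s(u, p.getVert 1) ∈ p.edges := by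
  simpa using p.mk_mem_edges_iff_exists.2 ⟨0, Nat.pos_of_ne_zero hp, rfl⟩

theorem mk_getVert_end_mem_edges {u v : V} (p : G.Walk u v) {n : ℕ} (hn : p.length = n + 1) :
    s(p.getVert n, v) ∈ p.edges := by
  refine p.mk_mem_edges_iff_exists.2 ⟨n, by omega, ?_⟩
  rw [← hn, getVert_length]

def extendIf {u v x y : V} (p : G.Walk u v) (hx : G.Adj x u) (hy : G.Adj v y) :
    (front back : Bool) → Σ s t, G.Walk s t
  | true, true => ⟨x, y, cons hx (p.concat hy)⟩
  | true, false => ⟨x, v, cons hx p⟩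
  | false, true => ⟨u, y, p.concat hy⟩
  | false, false => ⟨u, v, p⟩

variable {u v x y : V} (p : G.Walk u v) (hx : G.Adj x u) (hy : G.Adj v y) (front back : Bool)

theorem edges_extendIf : (p.extendIf hx hy front back).2.2.edges =
    (if front then [s(x, u)] else []) ++ p.edges ++ (if back then [s(v, y)] else []) := by
  cases front <;> cases back <;> simp [extendIf]

theorem length_le_length_extendIf : p.length ≤ (p.extendIf hx hy front back).2.2.length := by
  cases front <;> cases back <;> simp only [extendIf, length_cons, length_concat] <;> omega

theorem length_extendIf_le : (p.extendIf hx hy front back).2.2.length ≤ p.length + 2 := by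
  cases front <;> cases back <;> simp [extendIf]

theorem isPath_extendIf (hp : p.IsPath) (hxp : front → x ∉ p.support)
    (hyp : back → y ∉ p.support) (hxy : front → back → x ≠ y) :
    (p.extendIf hx hy front back).2.2.IsPath := by
  cases front <;> cases back <;> simp only [extendIf, forall_const] at hxp hyp hxy ⊢
  · exact hp
  · exact hp.concat hyp hy
  · exact hp.cons hxp
  · refine (hp.concat hyp hy).cons ?_
    simpa [support_concat, not_or] using ⟨hxp, hxy⟩

theorem end_edges_extendIf (h : (p.extendIf hx hy front back).2.2.length = p.length + 2) :
    s((p.extendIf hx hy front back).1, (p.extendIf hx hy front back).2.2.getVert 1) = s(x, u) ∧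
    s((p.extendIf hx hy front back).2.2.getVert (p.length + 1),
      (p.extendIf hx hy front back).2.1) = s(v, y) := by
  cases front <;> cases back <;> simp [extendIf, concat_eq_append, getVert_append] at h ⊢

end SimpleGraph.Walk

theorem countP_long_walks_ending_at_le_one {V : Type*} [DecidableEq V] {G : SimpleGraph V}
    {M : Set (Sym2 V)} (hM : ∀ e ∈ M, ∀ f ∈ M, ∀ v ∈ e, v ∈ f → e = f) {L : ℕ}
    {D : List (Σ u v, G.Walk u v)}
    (hD : D.Pairwise fun p q => ∀ e ∈ p.2.2.edges, e ∉ q.2.2.edges)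
    (hends : ∀ p ∈ D, p.2.2.length = L + 1 →
      s(p.1, p.2.2.getVert 1) ∈ M ∧ s(p.2.2.getVert L, p.2.1) ∈ M) (v : V) :
    D.countP (fun p => decide (p.2.2.length = L + 1 ∧ (p.1 = v ∨ p.2.1 = v))) ≤ 1 := by
  have hv : ∀ p ∈ D, p.2.2.length = L + 1 → (p.1 = v ∨ p.2.1 = v) →
      ∃ e ∈ M, e ∈ p.2.2.edges ∧ v ∈ e := by
    rintro ⟨s, t, p⟩ hpD hlen hst
    obtain ⟨hfirst, hlast⟩ := hends _ hpD hlen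
    rcases hst with rfl | rfl
    · exact ⟨_, hfirst, p.mk_start_getVert_one_mem_edges (by simp_all), Sym2.mem_mk_left _ _⟩
    · exact ⟨_, hlast, p.mk_getVert_end_mem_edges hlen, Sym2.mem_mk_right _ _⟩
  refine List.countP_le_one_of_pairwise (hD.imp_of_mem fun hp hq hpq hboth => ?_)
  simp only [decide_eq_true_eq] at hboth
  obtain ⟨e, heM, hep, hve⟩ := hv _ hp hboth.1.1 hboth.1.2
  obtain ⟨f, hfM, hfq, hvf⟩ := hv _ hq hboth.2.1 hboth.2.2
  exact hpq e hep (hM e heM f hfM v hve hvf ▸ hfq)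

theorem edges_subset_trailGraph {V : Type*} {G : SimpleGraph V} {r : ℕ} {a b : ZMod r → V}
    (Pf : ∀ i : ZMod r, G.Walk (a i) (b i)) (i : ZMod r) :
    ∀ e ∈ (Pf i).edges, e ∈ (trailGraph G a b Pf).edgeSet := fun e he => by
  rw [trailGraph, edgeSet_fromEdgeSet]
  exact ⟨Or.inl (Set.mem_iUnion.2 ⟨i, he⟩),
    G.not_isDiag_of_mem_edgeSet ((Pf i).edges_subset_edgeSet he)⟩

/-- `Pf i` is the path `P_i` and `s(b i, a (i + 1))` the matching edge `e_i`. -/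
structure IsAlternatingClosedTrail {V : Type*} (G : SimpleGraph V) {r : ℕ} (a b : ZMod r → V)
    (Pf : ∀ i : ZMod r, G.Walk (a i) (b i)) : Prop where
  isPath : ∀ i, (Pf i).IsPath
  adj : ∀ i, G.Adj (b i) (a (i + 1))
  matching : ∀ i j, i ≠ j → ∀ x, x ∈ s(b i, a (i + 1)) → x ∉ s(b j, a (j + 1))
  matchingEdge_notMem_edges : ∀ i j, s(b i, a (i + 1)) ∉ (Pf j).edges
  edges_disjoint : ∀ i j, i ≠ j → ∀ e ∈ (Pf i).edges, e ∉ (Pf j).edges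

/-- The index of the path that absorbs `e_i`: `P_{i+1}` exactly when `P_i e_i` is not a path. -/
def matchingEdgeOwner {V : Type*} [DecidableEq V] {G : SimpleGraph V} {r : ℕ} {a b : ZMod r → V}
    (Pf : ∀ i : ZMod r, G.Walk (a i) (b i)) (i : ZMod r) : ZMod r :=
  if a (i + 1) ∈ (Pf i).support then i + 1 else i

theorem matchingEdgeOwner_eq_iff {V : Type*} [DecidableEq V] {G : SimpleGraph V} {r : ℕ}
    {a b : ZMod r → V} (Pf : ∀ i : ZMod r, G.Walk (a i) (b i)) {i j : ZMod r} :
    matchingEdgeOwner Pf i = j ↔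
      (i = j - 1 ∧ a j ∈ (Pf (j - 1)).support) ∨ (i = j ∧ a (j + 1) ∉ (Pf j).support) := by
  unfold matchingEdgeOwner
  split_ifs with h
  · constructor
    · rintro rfl
      exact Or.inl ⟨by simp, by rwa [add_sub_cancel_right]⟩
    · rintro (⟨rfl, -⟩ | ⟨rfl, h'⟩)
      · simp
      · exact absurd h h'
  · constructor
    · rintro rfl
      exact Or.inr ⟨rfl, h⟩
    · rintro (⟨rfl, h'⟩ | ⟨rfl, -⟩)
      · rw [sub_add_cancel] at h
        exact absurd h' h
      · rfl

namespace IsAlternatingClosedTrail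

variable {V : Type*} {G : SimpleGraph V} {r : ℕ} {a b : ZMod r → V}
  {Pf : ∀ i : ZMod r, G.Walk (a i) (b i)}

theorem eq_of_mem_of_mem (hW : IsAlternatingClosedTrail G a b Pf) {i j : ZMod r} {x : V}
    (hi : x ∈ s(b i, a (i + 1))) (hj : x ∈ s(b j, a (j + 1))) : i = j := by
  by_contra hij
  exact hW.matching i j hij x hi hj

theorem matchingEdge_injective (hW : IsAlternatingClosedTrail G a b Pf) :
    Function.Injective fun i => s(b i, a (i + 1)) := fun i j hij =>
  hW.eq_of_mem_of_mem (Sym2.mem_mk_left _ _) (by simp only at hij; simp [← hij])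

theorem adj_trailGraph (hW : IsAlternatingClosedTrail G a b Pf) (i : ZMod r) :
    (trailGraph G a b Pf).Adj (b i) (a (i + 1)) := by
  rw [trailGraph, fromEdgeSet_adj]
  exact ⟨Or.inr ⟨i, rfl⟩, (hW.adj i).ne⟩

theorem notMem_support_of_mem_support [Fact (1 < r)] (hW : IsAlternatingClosedTrail G a b Pf)
    (hnottrapped : ∀ i,
      ¬ (IsInternalVertex (Pf i) (a (i + 1)) ∧ IsInternalVertex (Pf (i + 1)) (b i)))
    {i : ZMod r} (ha : a (i + 1) ∈ (Pf i).support) : b i ∉ (Pf (i + 1)).support := by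
  intro hb
  have hai : a (i + 1) ≠ a i := fun h => by
    simpa using hW.eq_of_mem_of_mem (i := i - 1) (j := i) (x := a i) (by simp) (by simp [h])
  have hbi : b i ≠ b (i + 1) := fun h => by
    simpa using hW.eq_of_mem_of_mem (i := i) (j := i + 1) (x := b i) (by simp) (by simp [h])
  exact hnottrapped i ⟨⟨ha, hai, (hW.adj i).ne'⟩, ⟨hb, (hW.adj i).ne, hbi⟩⟩

variable [DecidableEq V]

noncomputable def piece (hW : IsAlternatingClosedTrail G a b Pf) (j : ZMod r) :
    Σ u v, (trailGraph G a b Pf).Walk u v :=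
  ((Pf j).transfer _ (edges_subset_trailGraph Pf j)).extendIf
    (by simpa using hW.adj_trailGraph (j - 1)) (hW.adj_trailGraph j)
    (decide (a j ∈ (Pf (j - 1)).support)) (decide (a (j + 1) ∉ (Pf j).support))

variable (hW : IsAlternatingClosedTrail G a b Pf)

theorem mem_edges_piece (j : ZMod r) (e : Sym2 V) :
    e ∈ (hW.piece j).2.2.edges ↔
      e ∈ (Pf j).edges ∨ ∃ i, matchingEdgeOwner Pf i = j ∧ e = s(b i, a (i + 1)) := by
  simp only [piece, Walk.edges_extendIf, Walk.edges_transfer, matchingEdgeOwner_eq_iff,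
    List.mem_append, List.mem_ite_nil_right, List.mem_singleton, decide_eq_true_eq]
  constructor
  · rintro ((⟨h, rfl⟩ | he) | ⟨h, rfl⟩)
    · exact Or.inr ⟨j - 1, Or.inl ⟨rfl, h⟩, by simp⟩
    · exact Or.inl he
    · exact Or.inr ⟨j, Or.inr ⟨rfl, h⟩, rfl⟩
  · rintro (he | ⟨i, ⟨rfl, h⟩ | ⟨rfl, h⟩, rfl⟩)
    · exact Or.inl (Or.inr he)
    · exact Or.inl (Or.inl ⟨h, by simp⟩)
    · exact Or.inr ⟨h, rfl⟩

theorem disjoint_edges_piece {i j : ZMod r} (hij : i ≠ j) :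
    ∀ e ∈ (hW.piece i).2.2.edges, e ∉ (hW.piece j).2.2.edges := by
  intro e hi hj
  rw [mem_edges_piece] at hi hj
  rcases hi with hi | ⟨m, rfl, rfl⟩ <;> rcases hj with hj | ⟨m', rfl, he⟩
  · exact hW.edges_disjoint i j hij e hi hj
  · exact hW.matchingEdge_notMem_edges m' i (he ▸ hi)
  · exact hW.matchingEdge_notMem_edges m _ hj
  · exact hij (congrArg _ (hW.matchingEdge_injective he))

theorem mem_edgeSet_trailGraph_iff (e : Sym2 V) :
    e ∈ (trailGraph G a b Pf).edgeSet ↔ ∃ j, e ∈ (hW.piece j).2.2.edges := by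
  refine ⟨fun he => ?_, fun ⟨j, he⟩ => (hW.piece j).2.2.edges_subset_edgeSet he⟩
  rw [trailGraph, edgeSet_fromEdgeSet] at he
  rcases he.1 with he | ⟨i, rfl⟩
  · obtain ⟨j, he⟩ := Set.mem_iUnion.1 he
    exact ⟨j, (hW.mem_edges_piece j _).2 (Or.inl he)⟩
  · exact ⟨matchingEdgeOwner Pf i, (hW.mem_edges_piece _ _).2 (Or.inr ⟨i, rfl, rfl⟩)⟩

theorem isPath_piece [Fact (1 < r)]
    (hnottrapped : ∀ i,
      ¬ (IsInternalVertex (Pf i) (a (i + 1)) ∧ IsInternalVertex (Pf (i + 1)) (b i)))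
    (j : ZMod r) : (hW.piece j).2.2.IsPath := by
  refine Walk.isPath_extendIf _ _ _ _ _ ((hW.isPath j).transfer _) ?_ ?_ ?_ <;>
    simp only [decide_eq_true_eq, Walk.support_transfer]
  · intro h
    have := hW.notMem_support_of_mem_support hnottrapped (i := j - 1) (by simpa using h)
    rwa [sub_add_cancel] at this
  · exact id
  · intro _ _ h
    simpa using hW.eq_of_mem_of_mem (i := j - 1) (j := j) (x := b (j - 1)) (by simp) (by simp [h])

theorem length_piece_mem (j : ZMod r) :
    (Pf j).length ≤ (hW.piece j).2.2.length ∧ (hW.piece j).2.2.length ≤ (Pf j).length + 2 := by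
  unfold piece
  rw [← Walk.length_transfer (Pf j) (edges_subset_trailGraph Pf j)]
  exact ⟨Walk.length_le_length_extendIf .., Walk.length_extendIf_le ..⟩

theorem end_edges_piece {j : ZMod r} (h : (hW.piece j).2.2.length = (Pf j).length + 2) :
    s((hW.piece j).1, (hW.piece j).2.2.getVert 1) = s(b (j - 1), a j) ∧
    s((hW.piece j).2.2.getVert ((Pf j).length + 1), (hW.piece j).2.1) = s(b j, a (j + 1)) := by
  unfold piece at h ⊢
  rw [← Walk.length_transfer (Pf j) (edges_subset_trailGraph Pf j)] at h ⊢
  exact Walk.end_edges_extendIf _ _ _ _ _ h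

end IsAlternatingClosedTrail

/-- Let `W` be an alternating `r`-closed trail (`r ≥ 2`) built from
paths `P_i` of length `2k-1` and pairwise nonadjacent matching edges
`e_i = (b i)(a (i+1))`, such that no `e_i` is trapped in `P_i e_i P_{i+1}`.
Then `W` decomposes into `r` paths of lengths in `{2k-1, 2k, 2k+1}` such that
every path of length `2k+1` has both end edges among the matching edges;
consequently each vertex of `W` is an end vertex of at most one path of length
`2k+1` in the decomposition. -/
theorem stmt16 {V : Type*} [DecidableEq V] (k r : ℕ) (hk : 3 ≤ k) (hr : 2 ≤ r)
    (G : SimpleGraph V)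
    (a b : ZMod r → V)
    (Pf : ∀ i : ZMod r, G.Walk (a i) (b i))
    (hpath : ∀ i, (Pf i).IsPath ∧ (Pf i).length = 2 * k - 1)
    (hadj : ∀ i, G.Adj (b i) (a (i + 1)))
    (hmatching : ∀ i j, i ≠ j →
      ∀ x, x ∈ s(b i, a (i + 1)) → x ∉ s(b j, a (j + 1)))
    (hnotin : ∀ i j, s(b i, a (i + 1)) ∉ (Pf j).edges)
    (hdisj : ∀ i j, i ≠ j → ∀ e ∈ (Pf i).edges, e ∉ (Pf j).edges)
    (hnottrapped : ∀ i,
      ¬ (IsInternalVertex (Pf i) (a (i + 1)) ∧ IsInternalVertex (Pf (i + 1)) (b i))) :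
    ∃ D : List (Σ u : V, Σ v : V, (trailGraph G a b Pf).Walk u v),
      D.length = r ∧
      (∀ p ∈ D, p.2.2.IsPath ∧
        (p.2.2.length = 2 * k - 1 ∨ p.2.2.length = 2 * k ∨ p.2.2.length = 2 * k + 1)) ∧
      (∀ e, e ∈ (trailGraph G a b Pf).edgeSet ↔ ∃ p ∈ D, e ∈ p.2.2.edges) ∧
      D.Pairwise (fun p q => ∀ e ∈ p.2.2.edges, e ∉ q.2.2.edges) ∧
      (∀ p ∈ D, p.2.2.length = 2 * k + 1 →
        s(p.1, p.2.2.getVert 1) ∈ Set.range (fun i => s(b i, a (i + 1))) ∧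
        s(p.2.2.getVert (2 * k), p.2.1) ∈ Set.range (fun i => s(b i, a (i + 1)))) ∧
      (∀ v : V,
        D.countP (fun p => decide (p.2.2.length = 2 * k + 1 ∧ (p.1 = v ∨ p.2.1 = v))) ≤ 1) := by
  have : Fact (1 < r) := ⟨hr⟩
  have hW : IsAlternatingClosedTrail G a b Pf :=
    ⟨fun i => (hpath i).1, hadj, hmatching, hnotin, hdisj⟩
  have hM : ∀ e ∈ Set.range (fun i => s(b i, a (i + 1))),
      ∀ f ∈ Set.range (fun i => s(b i, a (i + 1))), ∀ v ∈ e, v ∈ f → e = f := by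
    rintro _ ⟨i, rfl⟩ _ ⟨j, rfl⟩ v hi hj
    rw [hW.eq_of_mem_of_mem hi hj]
  set D := (Finset.univ : Finset (ZMod r)).toList.map hW.piece
  have hmemD : ∀ p, p ∈ D ↔ ∃ j, hW.piece j = p := by simp [D]
  have hdisjD : D.Pairwise fun p q => ∀ e ∈ p.2.2.edges, e ∉ q.2.2.edges :=
    List.pairwise_map.2 ((Finset.nodup_toList _).imp fun hij => hW.disjoint_edges_piece hij)
  have hends : ∀ p ∈ D, p.2.2.length = 2 * k + 1 →
      s(p.1, p.2.2.getVert 1) ∈ Set.range (fun i => s(b i, a (i + 1))) ∧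
      s(p.2.2.getVert (2 * k), p.2.1) ∈ Set.range (fun i => s(b i, a (i + 1))) := by
    rintro _ hp hlong
    obtain ⟨j, rfl⟩ := (hmemD _).1 hp
    have hPj : 2 * k = (Pf j).length + 1 := by rw [(hpath j).2]; omega
    obtain ⟨hfirst, hlast⟩ := hW.end_edges_piece (j := j) (by omega)
    exact ⟨⟨j - 1, by simpa using hfirst.symm⟩, ⟨j, by rw [hPj, hlast]⟩⟩
  refine ⟨D, by simp [D], fun p hp => ?_, fun e => ?_, hdisjD, hends,
    countP_long_walks_ending_at_le_one hM hdisjD hends⟩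
  · obtain ⟨j, rfl⟩ := (hmemD p).1 hp
    have := hW.length_piece_mem j
    have := (hpath j).2
    exact ⟨hW.isPath_piece hnottrapped j, by omega⟩
  · rw [hW.mem_edgeSet_trailGraph_iff]
    simp [D]
end
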